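/- arXiv:2204.06438 — 5 statements merged into one kernel-verified Lean document; each statement's English description precedes it below -/
import Mathlib

section
/- Consider a priority schedule with at least two groups on n jobs with strictly positive sizes. Let A be the total size of the jobs in groups of priority strictly higher than the penultimate group, B > 0 the total size of the jobs in the penultimate group, and L > 0 the total size of the jobs in the lowest-priority group, so A + B + L = D. Then for any job i in the penultimate group and any job j in the lowest-priority group, f_j = 1 + (A + B)/(D + d_j) is strictly greater than f_i = 1 + (A − L)/(D + d_i). Consequently, the worst (largest) fairness under a priority schedule applies to a job in the lowest-priority group. -/
/-- In a priority schedule with at least two groups (group `G i < g`,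
lower index = higher priority) on jobs of strictly positive sizes, let `A` be the
total size of the jobs in groups of priority strictly higher than the penultimate
group `g-2`, `B > 0` the total size of the penultimate group, `L > 0` the total size
of the lowest-priority group `g-1`, and `D` the total size of all jobs.  Then for any
job `i` in the penultimate group and any job `j` in the lowest group, the fairness
`f_j = c_j/((D+d_j)/2) = 1 + (A+B)/(D+d_j)` strictly exceeds
`f_i = c_i/((D+d_i)/2) = 1 + (A-L)/(D+d_i)`; hence the worst fairness applies to a
job of the lowest-priority group. -/
theorem worst_fairness_in_last_group (n g : ℕ) (hg : 2 ≤ g)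
    (d : Fin n → ℝ) (hd : ∀ i, 0 < d i)
    (G : Fin n → ℕ) (hG : ∀ i, G i < g)
    (A B L D : ℝ)
    (hA : A = ∑ i ∈ Finset.univ.filter (fun i : Fin n => G i < g - 2), d i)
    (hB : B = ∑ i ∈ Finset.univ.filter (fun i : Fin n => G i = g - 2), d i)
    (hL : L = ∑ i ∈ Finset.univ.filter (fun i : Fin n => G i = g - 1), d i)
    (hD : D = ∑ i : Fin n, d i)
    (hBpos : 0 < B) (hLpos : 0 < L)
    (i j : Fin n) (hi : G i = g - 2) (hj : G j = g - 1) :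
    (A + (B + d i) / 2) / ((D + d i) / 2) = 1 + (A - L) / (D + d i) ∧
    (A + B + (L + d j) / 2) / ((D + d j) / 2) = 1 + (A + B) / (D + d j) ∧
    1 + (A - L) / (D + d i) < 1 + (A + B) / (D + d j) := by
  have hsplit : D = A + B + L := by
    rw [hA, hB, hL, hD, Finset.sum_filter, Finset.sum_filter, Finset.sum_filter,
      ← Finset.sum_add_distrib, ← Finset.sum_add_distrib]
    apply Finset.sum_congr rfl
    intro x _
    have := hG x
    split_ifs <;> first | ring1 | (exfalso; omega)
  subst hsplit
  have hA0 : 0 ≤ A := by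
    rw [hA]; exact Finset.sum_nonneg fun x _ => (hd x).le
  have hdi : d i ≤ B := by
    rw [hB]
    exact Finset.single_le_sum (fun x _ => (hd x).le)
      (Finset.mem_filter.mpr ⟨Finset.mem_univ i, hi⟩)
  have hdj : d j ≤ L := by
    rw [hL]
    exact Finset.single_le_sum (fun x _ => (hd x).le)
      (Finset.mem_filter.mpr ⟨Finset.mem_univ j, hj⟩)
  have hpi : 0 < A + B + L + d i := by linarith [hd i]
  have hpj : 0 < A + B + L + d j := by linarith [hd j]
  refine ⟨by field_simp; ring, by field_simp; ring, ?_⟩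
  have key : (A - L) * (A + B + L + d j) < (A + B) * (A + B + L + d i) := by
    nlinarith [mul_le_mul_of_nonneg_left hdj hA0, mul_pos hBpos hLpos,
      mul_pos hLpos hLpos, mul_pos hBpos hpi, mul_nonneg hA0 (hd i).le,
      mul_le_mul_of_nonneg_left hdi hA0, hd i, hd j]
  have := (div_lt_div_iff₀ hpi hpj).mpr key
  linarith
end

section
/- Let P be a set of jobs of total size A ≥ 0, let i be a job and T a nonempty set of jobs, all with positive sizes, and let D be the total size of all jobs in P ∪ {i} ∪ T. Suppose d_j ≤ d_ℓ for all ℓ ∈ T, where j ∈ T, and d_j < d_i. Consider schedule S that processes P first (in any fixed order), then job i, then the jobs of T in uniformly random order; and schedule S' that processes P first, then job j, then the jobs of (T ∖ {j}) ∪ {i} in uniformly random order. Then: (a) the expected social cost of S' is strictly smaller than that of S (indeed their difference is (1+|T|)·(d_i − d_j)/2 > 0); and (b) the maximum fairness over the jobs in the random (lowest-priority) section strictly decreases, i.e., max_{k ∈ (T∖{j})∪{i}} (1 + (A + d_j)/(D + d_k)) < 1 + (A + d_i)/(D + d_j). Hence swapping i and j is a Pareto improvement, and in any Pareto optimal priority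 schedule a smaller job never has higher priority than a larger job. -/
open Finset in
/-- Let `P` be a set of jobs of total size `A`, `i` a job and `T` a nonempty
set of jobs (all sizes positive, `j ∈ T` of minimal size in `T`, `d j < d i`), and `D` the
total size of `P ∪ {i} ∪ T`.  Schedule `S` runs `P` first, then `i`, then `T` in uniformly
random order; schedule `S'` runs `P` first, then `j`, then `(T \ {j}) ∪ {i}` in uniformly
random order.  Then (a) the expected social cost (ignoring the internal, identical, cost
of the `P`-section) drops by exactly `(1+|T|)(d i - d j)/2 > 0`, and (b) the fairness
of every job of the random section strictly improves below the old worst fairness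
`1 + (A + d i)/(D + d j)`.  Hence the swap is a Pareto improvement and in a Pareto optimal
priority schedule a smaller job never has higher priority than a larger job. -/
theorem pareto_swap {ι : Type*} [DecidableEq ι] [Fintype ι] (d : ι → ℝ)
    (P T : Finset ι) (i j : ι)
    (hiP : i ∉ P) (hiT : i ∉ T) (hPT : Disjoint P T) (hjT : j ∈ T)
    (hposP : ∀ p ∈ P, 0 < d p) (hposi : 0 < d i) (hposT : ∀ t ∈ T, 0 < d t)
    (hjmin : ∀ ℓ ∈ T, d j ≤ d ℓ) (hji : d j < d i)
    (A D : ℝ) (hA : A = ∑ p ∈ P, d p)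
    (hD : D = A + d i + ∑ t ∈ T, d t) :
    (((A + d i) + ∑ t ∈ T, ((A + d i) + ((∑ u ∈ T, d u) + d t) / 2)) -
      ((A + d j) + ∑ t ∈ insert i (T.erase j),
        ((A + d j) + ((∑ u ∈ insert i (T.erase j), d u) + d t) / 2))
      = (1 + (T.card : ℝ)) * (d i - d j) / 2) ∧
    (0 < (1 + (T.card : ℝ)) * (d i - d j) / 2) ∧
    (∀ k ∈ insert i (T.erase j),
      1 + (A + d j) / (D + d k) < 1 + (A + d i) / (D + d j)) := by

  have hiE : i ∉ T.erase j := fun h => hiT (Finset.mem_of_mem_erase h)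
  have hsum : ∑ u ∈ T.erase j, d u + d j = ∑ u ∈ T, d u := Finset.sum_erase_add T d hjT
  have hS' : ∑ u ∈ insert i (T.erase j), d u = d i + (∑ u ∈ T, d u - d j) := by
    rw [Finset.sum_insert hiE]; linarith
  have hcard : ((insert i (T.erase j)).card : ℝ) = T.card := by
    rw [Finset.card_insert_of_notMem hiE, Finset.card_erase_of_mem hjT]
    have := Finset.card_pos.mpr ⟨j, hjT⟩
    congr 1
    omega
  have key : ∀ (s : Finset ι) (C R : ℝ), ∑ t ∈ s, (C + (R + d t) / 2)
      = (s.card : ℝ) * C + ((s.card : ℝ) * R + ∑ t ∈ s, d t) / 2 := by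
    intro s C R
    rw [Finset.sum_add_distrib, Finset.sum_const, nsmul_eq_mul, ← Finset.sum_div,
      Finset.sum_add_distrib, Finset.sum_const, nsmul_eq_mul]
  have hA0 : 0 ≤ A := hA ▸ Finset.sum_nonneg fun p hp => (hposP p hp).le
  have hT0 : 0 ≤ ∑ t ∈ T, d t := Finset.sum_nonneg fun t ht => (hposT t ht).le
  have hDpos : 0 < D := by rw [hD]; linarith
  refine ⟨?_, ?_, ?_⟩
  · rw [key T, key (insert i (T.erase j)), hcard, hS']
    ring
  · have hn : (0:ℝ) ≤ T.card := Nat.cast_nonneg _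
    apply div_pos (mul_pos (by linarith) (by linarith)) two_pos
  · intro k hk
    have hdk : 0 < d k ∧ d j ≤ d k := by
      rcases Finset.mem_insert.1 hk with h | h
      · exact ⟨h ▸ hposi, h ▸ hji.le⟩
      · exact ⟨hposT k (Finset.mem_of_mem_erase h), hjmin k (Finset.mem_of_mem_erase h)⟩
    have h1 : 0 < D + d j := by have := hposT j hjT; linarith
    have h2 : 0 < D + d k := by linarith [hdk.1]
    have : (A + d j) / (D + d k) < (A + d i) / (D + d j) := by
      calc (A + d j) / (D + d k) ≤ (A + d j) / (D + d j) := by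
            apply div_le_div_of_nonneg_left (by have := hposT j hjT; linarith) h1 (by linarith [hdk.2])
        _ < (A + d i) / (D + d j) := by
            exact div_lt_div_of_pos_right (by linarith) h1
    linarith
end

section
/- Let d_1 ≤ d_2 ≤ ⋯ ≤ d_n be nonnegative job sizes with D = Σ_{ℓ=1}^n d_ℓ > 0, let 0 ≤ k ≤ n−1, and let ε_k = (Σ_{ℓ=1}^k d_ℓ)/D. Then the k-th Pareto schedule A^k is ε_k-fair: for every job i, c_i(A^k) ≤ (1 + ε_k)·(D + d_i)/2, i.e., the fairness f_i(A^k) = c_i(A^k)/((D + d_i)/2) is at most 1 + ε_k. -/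
/-- Expected completion time of job `i` under the `k`-th Pareto schedule `A^k`
(0-indexed: jobs `0,…,k-1` processed first in increasing order of size, then jobs
`k,…,n-1` in uniformly random order). -/
noncomputable def paretoCompletion {n : ℕ} (d : Fin n → ℝ) (k : ℕ) (i : Fin n) : ℝ :=
  if (i : ℕ) < k then ∑ ℓ ∈ Finset.univ.filter (fun ℓ : Fin n => ℓ ≤ i), d ℓ
  else (∑ ℓ ∈ Finset.univ.filter (fun ℓ : Fin n => (ℓ : ℕ) < k), d ℓ) +
    (((∑ ℓ : Fin n, d ℓ) - ∑ ℓ ∈ Finset.univ.filter (fun ℓ : Fin n => (ℓ : ℕ) < k), d ℓ)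
      + d i) / 2

/-- With `D = ∑ d ℓ > 0`, `0 ≤ k ≤ n-1` and
`ε_k = (sum of the k smallest sizes)/D`, the `k`-th Pareto schedule is `ε_k`-fair:
every job's expected completion time is at most `(1 + ε_k)` times its expected
completion time `(D + d i)/2` under the fairest mechanism. -/
theorem pareto_schedule_is_eps_fair (n : ℕ) (d : Fin n → ℝ)
    (hnn : ∀ i, 0 ≤ d i) (hmono : Monotone d)
    (hD : 0 < ∑ ℓ : Fin n, d ℓ) (k : ℕ) (hk : k ≤ n - 1) (i : Fin n) :
    paretoCompletion d k i ≤
      (1 + (∑ ℓ ∈ Finset.univ.filter (fun ℓ : Fin n => (ℓ : ℕ) < k), d ℓ) /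
        (∑ ℓ : Fin n, d ℓ)) * (((∑ ℓ : Fin n, d ℓ) + d i) / 2) := by
  set D := ∑ ℓ : Fin n, d ℓ with hDdef
  set S := ∑ ℓ ∈ Finset.univ.filter (fun ℓ : Fin n => (ℓ : ℕ) < k), d ℓ with hSdef
  have hS0 : 0 ≤ S := Finset.sum_nonneg fun ℓ _ => hnn ℓ
  have hSD : S ≤ D := Finset.sum_le_sum_of_subset_of_nonneg
    (Finset.filter_subset _ _) (fun ℓ _ _ => hnn ℓ)
  have hdi : 0 ≤ d i := hnn i
  have hDne : D ≠ 0 := ne_of_gt hD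
  unfold paretoCompletion
  split_ifs with h
  · have hc : (∑ ℓ ∈ Finset.univ.filter (fun ℓ : Fin n => ℓ ≤ i), d ℓ) ≤ S := by
      apply Finset.sum_le_sum_of_subset_of_nonneg _ (fun ℓ _ _ => hnn ℓ)
      intro ℓ hℓ
      simp only [Finset.mem_filter, Finset.mem_univ, true_and] at hℓ ⊢
      exact lt_of_le_of_lt (Nat.le_of_lt_succ (Nat.lt_succ_of_le hℓ)) h
    rw [add_mul, one_mul, div_mul_eq_mul_div, ← sub_nonneg]
    have hge : S / 2 ≤ S * ((D + d i) / 2) / D := by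
      have h1 : S * (D / 2) / D ≤ S * ((D + d i) / 2) / D := by
        gcongr; linarith
      have h2 : S * (D / 2) / D = S / 2 := by field_simp
      linarith
    linarith
  · rw [← hSdef, ← hDdef, add_mul, one_mul, div_mul_eq_mul_div, ← sub_nonneg]
    have hdiv : S * ((D + d i) / 2) / D = S / 2 + S * d i / (2 * D) := by
      field_simp
    rw [hdiv]
    have : 0 ≤ S * d i / (2 * D) := by positivity
    linarith
end

section
/- Let ε, D, r be reals with 0 < ε ≤ 1, r ≥ 1, and D ≥ 4/ε. Then (1 + rD − (1 − rε)D)/(r²εD + r) < (1 + ε)²/(4ε) + 1/2. Equivalently, this quantity is strictly less than 1/(4ε) + 1 + ε/4. -/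
/-- For reals `0 < ε ≤ 1`, `r ≥ 1` and `D ≥ 4/ε`,
`(1 + rD - (1 - rε)D)/(r²εD + r) < (1+ε)²/(4ε) + 1/2`, and this bound equals
`1/(4ε) + 1 + ε/4`. -/
theorem efficacy_key_inequality (ε D r : ℝ)
    (hε0 : 0 < ε) (hε1 : ε ≤ 1) (hr : 1 ≤ r) (hD : 4 / ε ≤ D) :
    (1 + r * D - (1 - r * ε) * D) / (r ^ 2 * ε * D + r) <
      (1 + ε) ^ 2 / (4 * ε) + 1 / 2 ∧
    (1 + ε) ^ 2 / (4 * ε) + 1 / 2 = 1 / (4 * ε) + 1 + ε / 4 := by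
  have hD0 : 0 < D := lt_of_lt_of_le (by positivity) hD
  have hεD : 4 ≤ ε * D := by
    rw [div_le_iff₀ hε0] at hD; linarith [hD]
  have hB : 0 < r ^ 2 * ε * D + r := by positivity
  constructor
  · rw [div_lt_iff₀ hB, div_add' _ _ _ (by positivity : (4:ℝ)*ε ≠ 0)]
    rw [div_mul_eq_mul_div, lt_div_iff₀ (by positivity : (0:ℝ) < 4*ε)]
    nlinarith [mul_nonneg (mul_nonneg hε0.le hD0.le) (sq_nonneg (r-2)), mul_nonneg (mul_nonneg (mul_nonneg hε0.le hε0.le) hD0.le) (mul_nonneg (le_trans zero_le_one hr) (by linarith : (0:ℝ) ≤ r-1)), mul_nonneg (mul_nonneg (mul_nonneg (mul_nonneg hε0.le hε0.le) hε0.le) hD0.le) (sq_nonneg r), mul_nonneg hε0.le (by linarith : (0:ℝ) ≤ r-1), mul_nonneg (mul_nonneg hε0.le hε0.le) (le_trans zero_le_one hr)]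
  · field_simp; ring
end

section
/- Let D > 1 and 0 < ε < (D−1)/D be reals, and define g(r) = (1 + rD − (1 − rε)D)/(r²εD + r) for r > 0. Then g attains its maximum over (0, ∞) at r_max = (1/((1+ε)D))·(D − 1 + √((D − εD + εD² − 1)/ε)); that is, g(r) ≤ g(r_max) for all r > 0. -/
/-- For reals `D > 1` and `0 < ε < (D-1)/D`, the function
`g(r) = (1 + rD - (1 - rε)D)/(r²εD + r)` attains its maximum over `(0, ∞)` at
`r_max = (1/((1+ε)D))·(D - 1 + √((D - εD + εD² - 1)/ε))`. -/
theorem efficacy_ratio_maximizer (D ε : ℝ) (hD : 1 < D)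
    (hε0 : 0 < ε) (hε1 : ε < (D - 1) / D)
    (rmax : ℝ)
    (hrmax : rmax = 1 / ((1 + ε) * D) *
      (D - 1 + Real.sqrt ((D - ε * D + ε * D ^ 2 - 1) / ε))) :
    ∀ r : ℝ, 0 < r →
      (1 + r * D - (1 - r * ε) * D) / (r ^ 2 * ε * D + r) ≤
        (1 + rmax * D - (1 - rmax * ε) * D) / (rmax ^ 2 * ε * D + rmax) := by
  intro r hr
  have hD0 : (0 : ℝ) < D := by linarith
  set s := Real.sqrt ((D - ε * D + ε * D ^ 2 - 1) / ε) with hs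
  have harg : 0 ≤ (D - ε * D + ε * D ^ 2 - 1) / ε := by
    apply div_nonneg _ hε0.le
    nlinarith [mul_pos hε0 hD0, mul_pos (mul_pos hε0 hD0) hD0]
  have hs0 : 0 ≤ s := Real.sqrt_nonneg _
  have hs2 : s ^ 2 = (D - ε * D + ε * D ^ 2 - 1) / ε := Real.sq_sqrt harg
  have hsε : ε * s ^ 2 = D - ε * D + ε * D ^ 2 - 1 := by
    rw [hs2]; field_simp
  have hB : (0 : ℝ) < (1 + ε) * D := by positivity
  have hBr : (1 + ε) * D * rmax = (D - 1) + s := by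
    rw [hrmax]; field_simp
  have hrm : 0 < rmax := by
    have h1 : 0 < (D - 1) + s := by linarith
    nlinarith
  -- quadratic identity at rmax
  have hquadB : ((1 + ε) * D) *
      (ε * D * ((1 + ε) * D) * rmax ^ 2 - 2 * (D - 1) * (ε * D) * rmax - (D - 1)) = 0 := by
    have h1 : ((1 + ε) * D * rmax) ^ 2 = ((D - 1) + s) ^ 2 := by rw [hBr]
    linear_combination (ε * D) * h1 + (-2 * (D - 1) * (ε * D)) * hBr + D * hsε
  have hquad : ε * D * ((1 + ε) * D) * rmax ^ 2 - 2 * (D - 1) * (ε * D) * rmax - (D - 1) = 0 :=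
    by
    rcases mul_eq_zero.mp hquadB with h | h
    · exact absurd h (ne_of_gt hB)
    · exact h
  have hden1 : 0 < r ^ 2 * ε * D + r := by
    have : 0 ≤ r ^ 2 * ε * D := by positivity
    linarith
  have hden2 : 0 < rmax ^ 2 * ε * D + rmax := by
    have : 0 ≤ rmax ^ 2 * ε * D := by positivity
    linarith
  rw [div_le_div_iff₀ hden1 hden2]
  have h2 : (r - rmax) *
      (ε * D * ((1 + ε) * D) * rmax ^ 2 - 2 * (D - 1) * (ε * D) * rmax - (D - 1)) = 0 := by
    rw [hquad]; ring
  have h3 : 0 ≤ ε * D * s * (r - rmax) ^ 2 := by positivity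
  have key : (1 + rmax * D - (1 - rmax * ε) * D) * (r ^ 2 * ε * D + r) -
      (1 + r * D - (1 - r * ε) * D) * (rmax ^ 2 * ε * D + rmax) =
      ε * D * ((1 + ε) * D * rmax - (D - 1)) * (r - rmax) ^ 2 +
      (r - rmax) *
        (ε * D * ((1 + ε) * D) * rmax ^ 2 - 2 * (D - 1) * (ε * D) * rmax - (D - 1)) := by
    ring
  rw [hBr] at key
  nlinarith [key, h2, h3]
end
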